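/- arXiv:2105.03006 — 2 statements merged into one kernel-verified Lean document; each statement's English description precedes it below -/
import Mathlib

section
/- In a simple voting game W on [n], suppose player j weakly dominates player i. Then for every subset S⊆[n] with i,j∉S, the YES-efficacy scores satisfy α⁺_i(S∪{i}) ≤ α⁺_j(S∪{j}) and α⁺_i(S∪{i,j}) ≤ α⁺_j(S∪{i,j}). -/
open Finset

variable {α : Type*} [Fintype α] [DecidableEq α]

/-- A simple voting game on the player set `α`: a monotone collection of winning
coalitions in which the empty coalition loses and the full coalition wins. -/
def SimpleVotingGame (W : Finset (Finset α)) : Prop :=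
  (∀ S T : Finset α, S ∈ W → S ⊆ T → T ∈ W) ∧ (∅ : Finset α) ∉ W ∧ (univ : Finset α) ∈ W

/-- Player `i` is YES-decisive in the division `S`. -/
def YesDecisive (W : Finset (Finset α)) (i : α) (S : Finset α) : Prop :=
  i ∈ S ∧ S ∈ W ∧ S.erase i ∉ W

/-- Player `i` is NO-decisive in the division `S`. -/
def NoDecisive (W : Finset (Finset α)) (i : α) (S : Finset α) : Prop :=
  i ∉ S ∧ S ∉ W ∧ insert i S ∈ W

/-- The loyal children of a winning division `S`: the winning divisions `S \ {k}`, `k ∈ S`. -/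
def LCwin (W : Finset (Finset α)) (S : Finset α) : Finset (Finset α) :=
  (S.image fun k => S.erase k).filter (· ∈ W)

/-- The loyal children of a losing division `S`: the losing divisions `S ∪ {k}`, `k ∉ S`. -/
def LCloss (W : Finset (Finset α)) (S : Finset α) : Finset (Finset α) :=
  (Sᶜ.image fun k => insert k S).filter (· ∉ W)

/-- The YES-efficacy score `α⁺_i(S)`: `1` if `i` is YES-decisive in `S`, `0` if `S` is
losing or `i ∉ S`, and otherwise the arithmetic mean of `α⁺_i` over the loyal children. -/
noncomputable def alphaPlus (W : Finset (Finset α)) (i : α) (S : Finset α) : ℝ :=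
  if i ∈ S ∧ S ∈ W ∧ S.erase i ∉ W then 1
  else if S ∉ W ∨ i ∉ S then 0
  else (∑ T ∈ (LCwin W S).attach, alphaPlus W i T.1) / (LCwin W S).card
termination_by S.card
decreasing_by
  obtain ⟨T, hT⟩ := T
  simp only [LCwin, Finset.mem_filter, Finset.mem_image] at hT
  obtain ⟨⟨k, hk, rfl⟩, -⟩ := hT
  simpa using Finset.card_erase_lt_of_mem hk

/-- The NO-efficacy score `α⁻_i(S)`: `1` if `i` is NO-decisive in `S`, `0` if `S` is
winning or `i ∈ S`, and otherwise the arithmetic mean of `α⁻_i` over the loyal children. -/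
noncomputable def alphaMinus (W : Finset (Finset α)) (i : α) (S : Finset α) : ℝ :=
  if i ∉ S ∧ S ∉ W ∧ insert i S ∈ W then 1
  else if S ∈ W ∨ i ∈ S then 0
  else (∑ T ∈ (LCloss W S).attach, alphaMinus W i T.1) / (LCloss W S).card
termination_by Sᶜ.card
decreasing_by
  obtain ⟨T, hT⟩ := T
  simp only [LCloss, Finset.mem_filter, Finset.mem_image] at hT
  obtain ⟨⟨k, hk, rfl⟩, -⟩ := hT
  rw [Finset.compl_insert]
  exact Finset.card_erase_lt_of_mem hk

/-- The efficacy score `α_i(S) = α⁺_i(S) + α⁻_i(S)`. -/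
noncomputable def alphaScore (W : Finset (Finset α)) (i : α) (S : Finset α) : ℝ :=
  alphaPlus W i S + alphaMinus W i S

/-- The Recursive Measure of YES-voting power (a priori, equiprobable divisions). -/
noncomputable def RMplus (W : Finset (Finset α)) (i : α) : ℝ :=
  (1 / 2 ^ Fintype.card α) * ∑ S : Finset α, alphaPlus W i S

/-- The Recursive Measure of NO-voting power (a priori, equiprobable divisions). -/
noncomputable def RMminus (W : Finset (Finset α)) (i : α) : ℝ :=
  (1 / 2 ^ Fintype.card α) * ∑ S : Finset α, alphaMinus W i S

/-- The Recursive Measure of voting power of player `i` (a priori):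
`RM_i = 2^{-m} · Σ_S α_i(S)` where `m` is the number of players. -/
noncomputable def RM (W : Finset (Finset α)) (i : α) : ℝ :=
  (1 / 2 ^ Fintype.card α) * ∑ S : Finset α, alphaScore W i S

/-- `d` is a dummy voter: `d` is decisive in no division. -/
def IsDummy (W : Finset (Finset α)) (d : α) : Prop :=
  ∀ S : Finset α, d ∉ S → (insert d S ∈ W ↔ S ∈ W)

/-- Player `j` weakly dominates player `i`. -/
def WeaklyDominates (W : Finset (Finset α)) (j i : α) : Prop :=
  ∀ S : Finset α, i ∉ S → j ∉ S → insert i S ∈ W → insert j S ∈ W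

/-- `What` is the game obtained from `W` by player `j` donating its vote to player `i`. -/
def Donation (W What : Finset (Finset α)) (i j : α) : Prop :=
  ∀ S : Finset α, i ∉ S → j ∉ S →
    (insert i (insert j S) ∈ What ↔ insert i (insert j S) ∈ W) ∧
    (insert i S ∈ What ↔ insert i (insert j S) ∈ W) ∧
    (insert j S ∈ What ↔ S ∈ W) ∧
    (S ∈ What ↔ S ∈ W)

/-- `What` is obtained from `W` by inducing a (weak, symmetric) quarrel between `i` and `j`. -/
def Quarrel (W What : Finset (Finset α)) (i j : α) : Prop :=
  ∀ S : Finset α, i ∉ S → j ∉ S →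
    (insert i (insert j S) ∈ What ↔ (insert i S ∈ W ∨ insert j S ∈ W)) ∧
    (S ∈ What ↔ (insert i S ∈ W ∧ insert j S ∈ W)) ∧
    (insert i S ∈ What ↔ insert i S ∈ W) ∧
    (insert j S ∈ What ↔ insert j S ∈ W)

/-- The voting-independent (product) probability of a division `S`, given the
individual YES-vote probabilities `p`. -/
noncomputable def prodDist (p : α → ℝ) (S : Finset α) : ℝ :=
  (∏ k ∈ S, p k) * ∏ k ∈ Sᶜ, (1 - p k)

/-- The generalized Recursive Measure of YES-voting power under a
voting-independent probability distribution with vote probabilities `p`. -/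
noncomputable def RMplusP (W : Finset (Finset α)) (p : α → ℝ) (i : α) : ℝ :=
  ∑ S : Finset α, alphaPlus W i S * prodDist p S

/-- The generalized Recursive Measure of NO-voting power under a
voting-independent probability distribution with vote probabilities `p`. -/
noncomputable def RMminusP (W : Finset (Finset α)) (p : α → ℝ) (i : α) : ℝ :=
  ∑ S : Finset α, alphaMinus W i S * prodDist p S

/-! Both inequalities are proved by strong induction on `S`. In the main case of the first one,
`α⁺_i(S ∪ {i})` and `α⁺_j(S ∪ {j})` are averages over loyal children: the child `S` (score `0`)
and the children obtained by removing some `k ∈ S`. By dominance every such `k` for `i` is one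
for `j`; on the common `k` the scores compare by induction, and at each extra `k` the player `j`
is decisive, adding a term `1` that can only raise an average of numbers at most `1`.
In the main case of the second inequality both averages run over the same children; the children
`S ∪ {j}` and `S ∪ {i}` exchange roles and are compared by the first inequality. -/

theorem sum_div_card_add_one_le_of_subset {ι : Type*} [DecidableEq ι] {A B : Finset ι}
    {f g : ι → ℝ} (hAB : A ⊆ B) (hfg : ∀ k ∈ A, f k ≤ g k) (hg : ∀ k ∈ A, g k ≤ 1)
    (hg_one : ∀ k ∈ B \ A, g k = 1) :
    (∑ k ∈ A, f k) / (#A + 1) ≤ (∑ k ∈ B, g k) / (#B + 1) := by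
  have hsplit : ∑ k ∈ B, g k = ∑ k ∈ A, g k + (#B - #A) := by
    rw [← sum_sdiff hAB, sum_congr rfl hg_one, sum_const, card_sdiff_of_subset hAB, nsmul_one,
      Nat.cast_sub (card_le_card hAB)]
    ring
  have hfg_sum : ∑ k ∈ A, f k ≤ ∑ k ∈ A, g k := sum_le_sum hfg
  have hg_sum : ∑ k ∈ A, g k ≤ #A := by simpa using sum_le_sum hg
  have hcard : (#A : ℝ) ≤ #B := by exact_mod_cast card_le_card hAB
  rw [div_le_div_iff₀ (by positivity) (by positivity), hsplit]
  nlinarith [mul_nonneg (sub_nonneg.2 hcard) (by linarith : (0 : ℝ) ≤ #A + 1 - ∑ k ∈ A, g k)]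

section VotingGame

variable {α : Type*} [DecidableEq α] {W : Finset (Finset α)} {i j : α} {S T : Finset α}

theorem filter_insert_erase {P : Finset α → Prop} [DecidablePred P] (hi : i ∉ S) (hS : P S) :
    {k ∈ insert i S | P ((insert i S).erase k)} =
      insert i {k ∈ S | P (insert i (S.erase k))} := by
  rw [filter_insert, if_pos (by rwa [erase_insert hi])]
  congr 1
  refine filter_congr fun k hk => ?_
  rw [erase_insert_of_ne (ne_of_mem_of_not_mem hk hi).symm]

theorem alphaPlus_nonneg (W : Finset (Finset α)) (i : α) (S : Finset α) :
    0 ≤ alphaPlus W i S := by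
  rw [alphaPlus]
  split_ifs
  · exact zero_le_one
  · exact le_rfl
  · exact div_nonneg (sum_nonneg fun T _ => alphaPlus_nonneg W i T.1) (Nat.cast_nonneg _)
termination_by S.card
decreasing_by
  obtain ⟨T, hT⟩ := T
  simp only [LCwin, mem_filter, mem_image] at hT
  obtain ⟨⟨k, hk, rfl⟩, -⟩ := hT
  simpa using card_erase_lt_of_mem hk

theorem alphaPlus_le_one (W : Finset (Finset α)) (i : α) (S : Finset α) :
    alphaPlus W i S ≤ 1 := by
  rw [alphaPlus]
  split_ifs
  · exact le_rfl
  · exact zero_le_one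
  · refine div_le_one_of_le₀ ?_ (Nat.cast_nonneg _)
    calc ∑ T ∈ (LCwin W S).attach, alphaPlus W i T.1
        ≤ ∑ _T ∈ (LCwin W S).attach, (1 : ℝ) := sum_le_sum fun T _ => alphaPlus_le_one W i T.1
      _ = #(LCwin W S) := by simp
termination_by S.card
decreasing_by
  obtain ⟨T, hT⟩ := T
  simp only [LCwin, mem_filter, mem_image] at hT
  obtain ⟨⟨k, hk, rfl⟩, -⟩ := hT
  simpa using card_erase_lt_of_mem hk

theorem alphaPlus_eq_zero_of_notMem (W : Finset (Finset α)) (h : i ∉ S) :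
    alphaPlus W i S = 0 := by
  rw [alphaPlus, if_neg fun hc => h hc.1, if_pos (Or.inr h)]

theorem alphaPlus_eq_zero_of_losing (h : S ∉ W) : alphaPlus W i S = 0 := by
  rw [alphaPlus, if_neg fun hc => h hc.2.1, if_pos (Or.inl h)]

theorem YesDecisive.alphaPlus_eq_one (h : YesDecisive W i S) : alphaPlus W i S = 1 := by
  rw [alphaPlus, if_pos (show i ∈ S ∧ S ∈ W ∧ S.erase i ∉ W from h)]

theorem alphaPlus_eq_average (hi : i ∈ T) (hT : T ∈ W) (hiT : T.erase i ∈ W) :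
    alphaPlus W i T =
      (∑ k ∈ T with T.erase k ∈ W, alphaPlus W i (T.erase k)) / #{k ∈ T | T.erase k ∈ W} := by
  have hinj : Set.InjOn T.erase ({k ∈ T | T.erase k ∈ W} : Finset α) :=
    (erase_injOn T).mono fun _ hk => mem_of_mem_filter _ (mem_coe.1 hk)
  have hLC : LCwin W T = {k ∈ T | T.erase k ∈ W}.image T.erase := by
    rw [LCwin, filter_image]
  rw [alphaPlus, if_neg fun hc => hc.2.2 hiT, if_neg (not_or.2 ⟨not_not.2 hT, not_not.2 hi⟩),
    sum_attach (LCwin W T) (alphaPlus W i), hLC, sum_image hinj, card_image_of_injOn hinj]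

theorem alphaPlus_insert_eq_average (hi : i ∉ S) (hS : S ∈ W) (hiS : insert i S ∈ W) :
    alphaPlus W i (insert i S) =
      (∑ k ∈ S with insert i (S.erase k) ∈ W, alphaPlus W i (insert i (S.erase k))) /
        (#{k ∈ S | insert i (S.erase k) ∈ W} + 1) := by
  have hi_filter : i ∉ {k ∈ S | insert i (S.erase k) ∈ W} := fun h => hi (mem_of_mem_filter _ h)
  rw [alphaPlus_eq_average (mem_insert_self i S) hiS (by rwa [erase_insert hi]),
    filter_insert_erase (P := (· ∈ W)) hi hS, sum_insert hi_filter,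
    card_insert_of_notMem hi_filter, erase_insert hi, alphaPlus_eq_zero_of_notMem W hi, zero_add,
    Nat.cast_succ]
  refine congrArg (· / _) (sum_congr rfl fun k hk => ?_)
  rw [erase_insert_of_ne (ne_of_mem_of_not_mem (mem_of_mem_filter _ hk) hi).symm]

theorem WeaklyDominates.alphaPlus_insert_le (hW : IsUpperSet (W : Set (Finset α)))
    (hdom : WeaklyDominates W j i) (S : Finset α) (hiS : i ∉ S) (hjS : j ∉ S) :
    alphaPlus W i (insert i S) ≤ alphaPlus W j (insert j S) := by
  induction S using strongInduction with
  | H S ih =>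
  have hi_erase (k : α) : i ∉ S.erase k := mt mem_of_mem_erase hiS
  have hj_erase (k : α) : j ∉ S.erase k := mt mem_of_mem_erase hjS
  by_cases hSi : insert i S ∈ W
  swap
  · rw [alphaPlus_eq_zero_of_losing hSi]
    exact alphaPlus_nonneg W j _
  have hSj : insert j S ∈ W := hdom S hiS hjS hSi
  by_cases hS : S ∈ W
  swap
  · rw [YesDecisive.alphaPlus_eq_one ⟨mem_insert_self j S, hSj, by rwa [erase_insert hjS]⟩]
    exact alphaPlus_le_one W i _
  rw [alphaPlus_insert_eq_average hiS hS hSi, alphaPlus_insert_eq_average hjS hS hSj]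
  refine sum_div_card_add_one_le_of_subset ?_ ?_ (fun k _ => alphaPlus_le_one W j _) ?_
  · exact monotone_filter_right S fun k _ => hdom _ (hi_erase k) (hj_erase k)
  · exact fun k hk => ih _ (erase_ssubset (mem_of_mem_filter k hk)) (hi_erase k) (hj_erase k)
  · intro k hk
    simp only [mem_sdiff, mem_filter, not_and] at hk
    obtain ⟨⟨hkS, hjk⟩, hik⟩ := hk
    -- `j` is decisive here: `S.erase k` loses because `insert i (S.erase k)` does.
    have hlose : S.erase k ∉ W := fun h => hik hkS (hW (subset_insert i _) h)
    exact YesDecisive.alphaPlus_eq_one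
      ⟨mem_insert_self j _, hjk, by rwa [erase_insert (hj_erase k)]⟩

theorem WeaklyDominates.alphaPlus_insert_insert_le (hW : IsUpperSet (W : Set (Finset α)))
    (hdom : WeaklyDominates W j i) (hij : i ≠ j) (S : Finset α) (hiS : i ∉ S) (hjS : j ∉ S) :
    alphaPlus W i (insert i (insert j S)) ≤ alphaPlus W j (insert i (insert j S)) := by
  induction S using strongInduction with
  | H S ih =>
  have hi_jS : i ∉ insert j S := by simp [hij, hiS]
  have hj_iS : j ∉ insert i S := by simp [hij.symm, hjS]
  have herase_i : (insert i (insert j S)).erase i = insert j S := erase_insert hi_jS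
  have herase_j : (insert i (insert j S)).erase j = insert i S := by
    rw [erase_insert_of_ne hij, erase_insert hjS]
  by_cases hT : insert i (insert j S) ∈ W
  swap
  · rw [alphaPlus_eq_zero_of_losing hT]
    exact alphaPlus_nonneg W j _
  by_cases hSi : insert i S ∈ W
  swap
  · rw [YesDecisive.alphaPlus_eq_one (i := j) ⟨by simp, hT, by rwa [herase_j]⟩]
    exact alphaPlus_le_one W i _
  have hSj : insert j S ∈ W := hdom S hiS hjS hSi
  rw [alphaPlus_eq_average (mem_insert_self i _) hT (by rwa [herase_i]),
    alphaPlus_eq_average (by simp) hT (by rwa [herase_j])]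
  refine div_le_div_of_nonneg_right ?_ (Nat.cast_nonneg _)
  set C := {k ∈ S | insert i (insert j (S.erase k)) ∈ W}
  have hj_C : j ∉ C := fun h => hjS (mem_of_mem_filter _ h)
  have hi_jC : i ∉ insert j C := by simp [C, hij, hiS]
  rw [filter_insert_erase (P := (· ∈ W)) hi_jS hSj,
    filter_insert_erase (P := fun U => insert i U ∈ W) hjS hSi, sum_insert hi_jC,
    sum_insert hi_jC, sum_insert hj_C, sum_insert hj_C, herase_i, herase_j,
    alphaPlus_eq_zero_of_notMem W hi_jS, alphaPlus_eq_zero_of_notMem W hj_iS, zero_add, zero_add]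
  refine add_le_add (hdom.alphaPlus_insert_le hW S hiS hjS) (sum_le_sum fun k hk => ?_)
  have hkS : k ∈ S := mem_of_mem_filter k hk
  rw [erase_insert_of_ne (ne_of_mem_of_not_mem hkS hiS).symm,
    erase_insert_of_ne (ne_of_mem_of_not_mem hkS hjS).symm]
  exact ih _ (erase_ssubset hkS) (mt mem_of_mem_erase hiS) (mt mem_of_mem_erase hjS)

end VotingGame

/-- weak dominance and YES-efficacy scores. -/
theorem dominance_alphaPlus {n : ℕ} (W : Finset (Finset (Fin n)))
    (hW : SimpleVotingGame W) (i j : Fin n)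
    (hdom : WeaklyDominates W j i) :
    ∀ S : Finset (Fin n), i ∉ S → j ∉ S →
      alphaPlus W i (insert i S) ≤ alphaPlus W j (insert j S) ∧
      alphaPlus W i (insert i (insert j S)) ≤ alphaPlus W j (insert i (insert j S)) := by
  have hup : IsUpperSet (W : Set (Finset (Fin n))) := fun S T hST hS => hW.1 S T hS hST
  intro S hiS hjS
  refine ⟨hdom.alphaPlus_insert_le hup S hiS hjS, ?_⟩
  rcases eq_or_ne i j with rfl | hij
  · exact le_rfl
  · exact hdom.alphaPlus_insert_insert_le hup hij S hiS hjS
end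

section
/- In a simple voting game W on [n], suppose player j weakly dominates player i. Then for every subset S⊆[n] with i,j∈S, the NO-efficacy scores satisfy α⁻_i(S\{i}) ≤ α⁻_j(S\{j}) and α⁻_i(S\{i,j}) ≤ α⁻_j(S\{i,j}). -/
open Finset

variable {α : Type*} [Fintype α] [DecidableEq α]

/-
Write `T = S \ {i, j}`. Weak dominance turns every coalition that `i` can make win
into one that `j` can make win, so `j` has at least as many ways to keep `T ∪ {i}` losing as `i`
has for `T ∪ {j}`, and every extra child of `T ∪ {i}` is one where `j` is NO-decisive (score `1`).
Matching the children by the transposition `(i j)` and inducting downwards on the division gives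
`α⁻_i(T ∪ {j}) ≤ α⁻_j(T ∪ {i})`; the same matching, now a permutation of the children of `T`,
then gives `α⁻_i(T) ≤ α⁻_j(T)`.
-/

lemma Finset.sum_div_card_le_sum_div_card_of_injOn {ι κ : Type*} [DecidableEq κ]
    {s : Finset ι} {t : Finset κ} {f : ι → ℝ} {g : κ → ℝ} {φ : ι → κ} (hs : s.Nonempty)
    (hφ : Set.MapsTo φ s t) (hφinj : Set.InjOn φ s) (hf : ∀ k ∈ s, f k ≤ 1)
    (hfg : ∀ k ∈ s, f k ≤ g (φ k)) (hg : ∀ k ∈ t \ s.image φ, 1 ≤ g k) :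
    (∑ k ∈ s, f k) / s.card ≤ (∑ k ∈ t, g k) / t.card := by
  have himage : s.image φ ⊆ t := image_subset_iff.2 hφ
  have hcard : s.card ≤ t.card := card_le_card_of_injOn φ hφ hφinj
  have hsum_le : ∑ k ∈ s, f k ≤ s.card := by
    simpa using sum_le_sum hf
  have hsum_image : ∑ k ∈ s, f k ≤ ∑ k ∈ s.image φ, g k := by
    rw [sum_image hφinj]
    exact sum_le_sum hfg
  have hsum_sdiff : ((t.card - s.card : ℕ) : ℝ) ≤ ∑ k ∈ t \ s.image φ, g k := by
    rw [← card_image_of_injOn hφinj, ← card_sdiff_of_subset himage]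
    simpa using sum_le_sum hg
  have hs' : (0 : ℝ) < s.card := by exact_mod_cast hs.card_pos
  have hcard' : (s.card : ℝ) ≤ t.card := by exact_mod_cast hcard
  rw [← sum_sdiff himage, div_le_div_iff₀ hs' (hs'.trans_le hcard')]
  push_cast [hcard] at hsum_sdiff
  nlinarith

section AlphaMinus

variable {W : Finset (Finset α)}

/-- `LCloss W S` is the image of this set under `(insert · S)`. -/
def loyalJoiners (W : Finset (Finset α)) (S : Finset α) : Finset α :=
  Sᶜ.filter fun k => insert k S ∉ W

@[simp]
lemma mem_loyalJoiners {S : Finset α} {k : α} :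
    k ∈ loyalJoiners W S ↔ k ∉ S ∧ insert k S ∉ W := by
  simp [loyalJoiners]

lemma card_compl_insert_lt {S : Finset α} {k : α} (hk : k ∉ S) :
    (insert k S)ᶜ.card < Sᶜ.card := by
  rw [compl_insert]
  exact card_erase_lt_of_mem (mem_compl.2 hk)

lemma alphaMinus_eq_zero {i : α} {S : Finset α} (h : S ∈ W ∨ i ∈ S) :
    alphaMinus W i S = 0 := by
  rw [alphaMinus, if_neg (by tauto), if_pos h]

lemma alphaMinus_eq_one {i : α} {S : Finset α} (h : NoDecisive W i S) :
    alphaMinus W i S = 1 := by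
  rw [alphaMinus]
  exact if_pos h

lemma alphaMinus_eq_sum_div_card {i : α} {S : Finset α} (hi : i ∉ S) (hS : S ∉ W)
    (hiS : insert i S ∉ W) :
    alphaMinus W i S =
      (∑ k ∈ loyalJoiners W S, alphaMinus W i (insert k S)) / (loyalJoiners W S).card := by
  have hLC : LCloss W S = (loyalJoiners W S).image (insert · S) := by
    rw [LCloss, loyalJoiners, filter_image]
  have hinj : Set.InjOn (insert · S) (loyalJoiners W S : Set α) := by
    intro k hk l _ hkl
    have : k ∈ insert l S := (show insert k S = insert l S from hkl) ▸ mem_insert_self k S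
    exact (mem_insert.1 this).resolve_right (mem_loyalJoiners.1 hk).1
  rw [alphaMinus, if_neg (by tauto), if_neg (by tauto), sum_attach (LCloss W S)
    (alphaMinus W i), hLC, sum_image hinj, card_image_of_injOn hinj]

lemma alphaMinus_nonneg (i : α) (S : Finset α) : 0 ≤ alphaMinus W i S := by
  by_cases hdec : NoDecisive W i S
  · rw [alphaMinus_eq_one hdec]
    exact zero_le_one
  by_cases hzero : S ∈ W ∨ i ∈ S
  · rw [alphaMinus_eq_zero hzero]
  rw [alphaMinus_eq_sum_div_card (by tauto) (by tauto) (by unfold NoDecisive at hdec; tauto)]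
  exact div_nonneg (sum_nonneg fun k _ => alphaMinus_nonneg i (insert k S)) (Nat.cast_nonneg _)
termination_by Sᶜ.card
decreasing_by exact card_compl_insert_lt (mem_loyalJoiners.1 ‹_›).1

lemma alphaMinus_le_one (i : α) (S : Finset α) : alphaMinus W i S ≤ 1 := by
  by_cases hdec : NoDecisive W i S
  · rw [alphaMinus_eq_one hdec]
  by_cases hzero : S ∈ W ∨ i ∈ S
  · rw [alphaMinus_eq_zero hzero]
    exact zero_le_one
  rw [alphaMinus_eq_sum_div_card (by tauto) (by tauto) (by unfold NoDecisive at hdec; tauto)]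
  refine div_le_one_of_le₀ ?_ (Nat.cast_nonneg _)
  simpa using sum_le_sum fun k (_ : k ∈ loyalJoiners W S) => alphaMinus_le_one i (insert k S)
termination_by Sᶜ.card
decreasing_by exact card_compl_insert_lt (mem_loyalJoiners.1 ‹_›).1

variable {i j : α} {T : Finset α}

open Equiv

lemma mapsTo_swap_loyalJoiners (hdom : WeaklyDominates W j i) (hi : i ∉ T) (hj : j ∉ T) :
    Set.MapsTo (swap i j) (loyalJoiners W (insert j T)) (loyalJoiners W (insert i T)) := by
  intro k hk
  rw [mem_coe, mem_loyalJoiners, mem_insert, not_or] at hk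
  obtain ⟨⟨hkj, hkT⟩, hkW⟩ := hk
  rw [mem_coe, mem_loyalJoiners]
  by_cases hki : k = i
  · subst hki
    rw [swap_apply_left, insert_comm]
    exact ⟨by simp [Ne.symm hkj, hj], hkW⟩
  · rw [swap_apply_of_ne_of_ne hki hkj]
    refine ⟨by simp [hki, hkT], fun hwin => hkW ?_⟩
    rw [insert_comm] at hwin ⊢
    exact hdom (insert k T) (by simp [Ne.symm hki, hi]) (by simp [Ne.symm hkj, hj]) hwin

lemma alphaMinus_eq_one_of_mem_sdiff_image_swap (hW : IsUpperSet (W : Set (Finset α)))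
    (hij : i ≠ j) (hi : i ∉ T) (hj : j ∉ T) {k : α}
    (hk : k ∈ loyalJoiners W (insert i T) \ (loyalJoiners W (insert j T)).image (swap i j)) :
    alphaMinus W j (insert k (insert i T)) = 1 := by
  rw [mem_sdiff, mem_loyalJoiners, mem_insert, not_or, mem_image] at hk
  obtain ⟨⟨⟨hki, hkT⟩, hkW⟩, hk_image⟩ := hk
  have hkj : k ≠ j := by
    rintro rfl
    refine hk_image ⟨i, mem_loyalJoiners.2 ⟨by simp [hij, hi], ?_⟩, swap_apply_left i k⟩
    rwa [insert_comm]
  have hk_win : insert k (insert j T) ∈ W := by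
    by_contra hk_lose
    exact hk_image ⟨k, mem_loyalJoiners.2 ⟨by simp [hkj, hkT], hk_lose⟩,
      swap_apply_of_ne_of_ne hki hkj⟩
  refine alphaMinus_eq_one ⟨by simp [Ne.symm hkj, Ne.symm hij, hj], hkW, hW ?_ hk_win⟩
  intro x
  simp only [mem_insert]
  tauto

theorem alphaMinus_insert_le_alphaMinus_insert (hW : IsUpperSet (W : Set (Finset α)))
    (hdom : WeaklyDominates W j i) (hij : i ≠ j) (T : Finset α) (hi : i ∉ T) (hj : j ∉ T) :
    alphaMinus W i (insert j T) ≤ alphaMinus W j (insert i T) := by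
  have hi' : i ∉ insert j T := by simp [hij, hi]
  have hj' : j ∉ insert i T := by simp [Ne.symm hij, hj]
  by_cases hjT : insert j T ∈ W
  · rw [alphaMinus_eq_zero (Or.inl hjT)]
    exact alphaMinus_nonneg j _
  have hiT : insert i T ∉ W := fun h => hjT (hdom T hi hj h)
  by_cases hijT : insert i (insert j T) ∈ W
  · rw [alphaMinus_eq_one ⟨hi', hjT, hijT⟩, alphaMinus_eq_one ⟨hj', hiT, insert_comm i j T ▸ hijT⟩]
  rw [alphaMinus_eq_sum_div_card hi' hjT hijT,
    alphaMinus_eq_sum_div_card hj' hiT (insert_comm i j T ▸ hijT)]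
  refine sum_div_card_le_sum_div_card_of_injOn ⟨i, mem_loyalJoiners.2 ⟨hi', hijT⟩⟩
    (mapsTo_swap_loyalJoiners hdom hi hj) (swap i j).injective.injOn
    (fun k _ => alphaMinus_le_one i _) (fun k hk => ?_)
    (fun k hk => (alphaMinus_eq_one_of_mem_sdiff_image_swap hW hij hi hj hk).ge)
  obtain ⟨hkjT, -⟩ := mem_loyalJoiners.1 hk
  have hkj : k ≠ j := fun h => hkjT (h ▸ mem_insert_self j T)
  have hkT : k ∉ T := fun h => hkjT (mem_insert_of_mem h)
  by_cases hki : k = i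
  · rw [hki, swap_apply_left, alphaMinus_eq_zero (Or.inr (mem_insert_self _ _)),
      alphaMinus_eq_zero (Or.inr (mem_insert_self _ _))]
  · rw [swap_apply_of_ne_of_ne hki hkj, insert_comm k j, insert_comm k i]
    exact alphaMinus_insert_le_alphaMinus_insert hW hdom hij (insert k T)
      (by simp [Ne.symm hki, hi]) (by simp [Ne.symm hkj, hj])
termination_by Tᶜ.card
decreasing_by exact card_compl_insert_lt hkT

theorem alphaMinus_le_alphaMinus_of_weaklyDominates (hW : IsUpperSet (W : Set (Finset α)))
    (hdom : WeaklyDominates W j i) (hij : i ≠ j) (T : Finset α) (hi : i ∉ T) (hj : j ∉ T) :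
    alphaMinus W i T ≤ alphaMinus W j T := by
  by_cases hT : T ∈ W
  · rw [alphaMinus_eq_zero (Or.inl hT)]
    exact alphaMinus_nonneg j T
  by_cases hjT : insert j T ∈ W
  · rw [alphaMinus_eq_one ⟨hj, hT, hjT⟩]
    exact alphaMinus_le_one i T
  have hiT : insert i T ∉ W := fun h => hjT (hdom T hi hj h)
  rw [alphaMinus_eq_sum_div_card hi hT hiT, alphaMinus_eq_sum_div_card hj hT hjT]
  have hswap_support : {k | swap i j k ≠ k} ⊆ (loyalJoiners W T : Set α) := by
    intro k hk
    rcases (swap_apply_ne_self_iff.1 hk).2 with rfl | rfl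
    · exact mem_loyalJoiners.2 ⟨hi, hiT⟩
    · exact mem_loyalJoiners.2 ⟨hj, hjT⟩
  rw [← Perm.sum_comp (swap i j) _ (fun k => alphaMinus W j (insert k T)) hswap_support]
  refine div_le_div_of_nonneg_right (sum_le_sum fun k hk => ?_) (Nat.cast_nonneg _)
  obtain ⟨hkT, -⟩ := mem_loyalJoiners.1 hk
  by_cases hki : k = i
  · rw [hki, swap_apply_left, alphaMinus_eq_zero (Or.inr (mem_insert_self _ _))]
    exact alphaMinus_nonneg j _
  by_cases hkj : k = j
  · rw [hkj, swap_apply_right]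
    exact alphaMinus_insert_le_alphaMinus_insert hW hdom hij T hi hj
  rw [swap_apply_of_ne_of_ne hki hkj]
  exact alphaMinus_le_alphaMinus_of_weaklyDominates hW hdom hij (insert k T)
    (by simp [Ne.symm hki, hi]) (by simp [Ne.symm hkj, hj])
termination_by Tᶜ.card
decreasing_by exact card_compl_insert_lt hkT

end AlphaMinus

/-- weak dominance and NO-efficacy scores. -/
theorem dominance_alphaMinus {n : ℕ} (W : Finset (Finset (Fin n)))
    (hW : SimpleVotingGame W) (i j : Fin n)
    (hdom : WeaklyDominates W j i) :
    ∀ S : Finset (Fin n), i ∈ S → j ∈ S →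
      alphaMinus W i (S.erase i) ≤ alphaMinus W j (S.erase j) ∧
      alphaMinus W i ((S.erase i).erase j) ≤ alphaMinus W j ((S.erase i).erase j) := by
  intro S hiS hjS
  rcases eq_or_ne i j with rfl | hij
  · exact ⟨le_rfl, le_rfl⟩
  have hW_upper : IsUpperSet (W : Set (Finset (Fin n))) := fun A B hAB hA => hW.1 A B hA hAB
  set T := (S.erase i).erase j with hT
  have hiT : i ∉ T := fun h => notMem_erase i S (mem_of_mem_erase h)
  have hjT : j ∉ T := notMem_erase j _
  have hS_erase_i : S.erase i = insert j T := (insert_erase (mem_erase.2 ⟨hij.symm, hjS⟩)).symm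
  have hS_erase_j : S.erase j = insert i T := by
    rw [hT, erase_right_comm, insert_erase (mem_erase.2 ⟨hij, hiS⟩)]
  rw [hS_erase_i, hS_erase_j]
  exact ⟨alphaMinus_insert_le_alphaMinus_insert hW_upper hdom hij T hiT hjT,
    alphaMinus_le_alphaMinus_of_weaklyDominates hW_upper hdom hij T hiT hjT⟩
end
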